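/- Let H be a positive even integer. (a) For every positive integer m with m | H: √m·exp(−iπ/4)·∑_{p ∈ ℤ, −H/2 ≤ p < H/2} exp(iπp²/m) = ∑_{x ∈ ℤ, −H/2 ≤ x < H/2} exp(−iπmx²). (b) For every negative integer m with (−m) | H: √(−m)·exp(iπ/4)·∑_{p ∈ ℤ, −H/2 ≤ p < H/2} exp(iπp²/m) = ∑_{x ∈ ℤ, −H/2 ≤ x < H/2} exp(−iπmx²). -/

import Mathlib

set_option maxHeartbeats 1000000

section PoissonGaussAux
open Complex Real Filter Topology

lemma cpow_real_mul {t : ℝ} (ht : 0 < t) {w : ℂ} (hw : w ≠ 0) (s : ℂ) :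
    ((t : ℂ) * w) ^ s = (t : ℂ) ^ s * w ^ s := by
  have ht0 : (t : ℂ) ≠ 0 := by exact_mod_cast ht.ne'
  rw [Complex.cpow_def_of_ne_zero (mul_ne_zero ht0 hw), Complex.cpow_def_of_ne_zero ht0,
    Complex.cpow_def_of_ne_zero hw, Complex.log_ofReal_mul ht hw, ← Complex.exp_add,
    Complex.ofReal_log ht.le]
  ring_nf

lemma norm_jacobiTheta₂_real_sub_one_le {z τ : ℂ} (hz : z.im = 0) (hτ : 0 < τ.im) :
    ‖jacobiTheta₂ z τ - 1‖ ≤ 2 / (1 - rexp (-π * τ.im)) * rexp (-π * τ.im) := by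
  set y := rexp (-π * τ.im) with hy
  have hy1 : y < 1 := by
    rw [hy, Real.exp_lt_one_iff]
    exact mul_neg_of_neg_of_pos (neg_lt_zero.mpr pi_pos) hτ
  have hy0 : 0 < y := Real.exp_pos _
  have hterm : ∀ n : ℤ, ‖jacobiTheta₂_term n z τ‖ ≤ y ^ n.natAbs := by
    intro n
    rw [norm_jacobiTheta₂_term, hz]
    have h2 : (n.natAbs : ℝ) ≤ (n : ℝ) ^ 2 := by
      have h3 : ((n.natAbs : ℝ)) ^ 2 = (n : ℝ) ^ 2 := by
        push_cast [Nat.cast_natAbs]; rw [_root_.sq_abs]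
      have h4 : (n.natAbs : ℝ) ≤ (n.natAbs : ℝ) ^ 2 := by
        have := Nat.le_mul_self n.natAbs
        rw [sq]; exact_mod_cast this
      linarith
    have h1 : -π * (n : ℝ) ^ 2 * τ.im - 2 * π * n * 0 ≤ (-π * τ.im) * n.natAbs := by
      have h5 := mul_le_mul_of_nonneg_left h2 (mul_pos pi_pos hτ).le
      nlinarith
    calc rexp (-π * ↑n ^ 2 * τ.im - 2 * π * ↑n * 0) ≤ rexp ((-π * τ.im) * n.natAbs) :=
          Real.exp_le_exp.mpr h1
      _ = y ^ n.natAbs := by rw [hy, ← Real.exp_nat_mul]; ring_nf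
  -- now manipulate the sum
  have hsum := hasSum_jacobiTheta₂_term z hτ
  have hsum2 := hsum.nat_add_neg
  have h0 : jacobiTheta₂_term 0 z τ = 1 := by
    simp [jacobiTheta₂_term]
  rw [h0] at hsum2
  rw [← hasSum_nat_add_iff' 1] at hsum2
  simp only [Finset.sum_range_one, Nat.cast_zero, neg_zero, h0] at hsum2
  -- hsum2 : HasSum (fun n : ℕ => jacobiTheta₂_term (n+1) z τ + jacobiTheta₂_term (-(n+1)) z τ)
  --   (jacobiTheta₂ z τ + 1 - (1 + 1))
  have hb : ∀ n : ℕ, ‖jacobiTheta₂_term (↑(n+1)) z τ + jacobiTheta₂_term (-↑(n+1)) z τ‖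
      ≤ 2 * y ^ (n+1) := by
    intro n
    refine (norm_add_le _ _).trans ?_
    have e1 := hterm (↑(n+1))
    have e2 := hterm (-(↑(n+1) : ℤ))
    simp only [Int.natAbs_natCast, Int.natAbs_neg] at e1 e2
    calc _ ≤ y ^ (((n:ℤ)+1)).natAbs + y ^ ((-((n:ℤ)+1))).natAbs := by
          push_cast at e1 e2 ⊢; exact add_le_add e1 e2
      _ = 2 * y ^ (n+1) := by
          rw [Int.natAbs_neg]
          have : ((n:ℤ)+1).natAbs = n + 1 := by omega
          rw [this]; ring
  have hgeom : HasSum (fun n : ℕ => 2 * y ^ (n + 1)) (2 * (y / (1 - y))) := by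
    have := hasSum_geometric_of_lt_one hy0.le hy1
    have h := (this.mul_left (2 * y))
    have : (fun n : ℕ => 2 * y * y ^ n) = fun n : ℕ => 2 * y ^ (n+1) := by
      funext n; ring
    rw [this] at h
    have hval : 2 * y * (1 - y)⁻¹ = 2 * (y / (1 - y)) := by ring
    rwa [hval] at h
  have hle : ‖jacobiTheta₂ z τ + 1 - (1+1)‖ ≤ 2 * (y / (1 - y)) := by
    refine hsum2.norm_le_of_bounded hgeom hb
  calc ‖jacobiTheta₂ z τ - 1‖ = ‖jacobiTheta₂ z τ + 1 - (1+1)‖ := by ring_nf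
    _ ≤ 2 * (y / (1 - y)) := hle
    _ = 2 / (1 - y) * y := by ring

lemma tendsto_jacobiTheta₂_one {ι : Type*} {l : Filter ι} {z : ℂ} (hz : z.im = 0)
    {w : ι → ℂ} (hw : Tendsto (fun i => (w i).im) l atTop) :
    Tendsto (fun i => jacobiTheta₂ z (w i)) l (𝓝 1) := by
  have key : Tendsto (fun i => jacobiTheta₂ z (w i) - 1) l (𝓝 0) := by
    apply squeeze_zero_norm' (a := fun i => 2 / (1 - rexp (-π)) * rexp (-π * (w i).im))
    · filter_upwards [hw.eventually_ge_atTop 1] with i hi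
      have him : 0 < (w i).im := lt_of_lt_of_le one_pos hi
      refine (norm_jacobiTheta₂_real_sub_one_le hz him).trans ?_
      have h1 : rexp (-π * (w i).im) ≤ rexp (-π) := by
        apply Real.exp_le_exp.mpr
        nlinarith [pi_pos]
      have h2 : 0 < 1 - rexp (-π) := by
        have : rexp (-π) < 1 := by
          rw [Real.exp_lt_one_iff]; linarith [pi_pos]
        linarith
      have h3 : 0 < 1 - rexp (-π * (w i).im) := by
        have : rexp (-π * (w i).im) < 1 := by
          rw [Real.exp_lt_one_iff]; nlinarith [pi_pos]
        linarith
      apply mul_le_mul_of_nonneg_right _ (Real.exp_pos _).le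
      apply div_le_div_of_nonneg_left (by norm_num) h2
      linarith
    · have : Tendsto (fun i => -π * (w i).im) l atBot := by
        apply Tendsto.const_mul_atTop_of_neg (by linarith [pi_pos] : -π < 0) hw
      have := Real.tendsto_exp_atBot.comp this
      simpa using this.const_mul (2 / (1 - rexp (-π)))
  have := key.add (tendsto_const_nhds (x := (1:ℂ)))
  simpa using this

-- partition of ℤ-tsum
def zModEquiv (m : ℕ) (hm : 0 < m) : Fin m × ℤ ≃ ℤ where
  toFun p := (p.1 : ℤ) + m * p.2
  invFun n := (⟨((n % m).toNat), by
      have h1 : 0 ≤ n % (m:ℤ) := Int.emod_nonneg n (by exact_mod_cast hm.ne')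
      have h2 : n % (m:ℤ) < m := Int.emod_lt_of_pos n (by exact_mod_cast hm)
      omega⟩, n / m)
  left_inv := by
    rintro ⟨⟨q, hq⟩, r⟩
    have hq' : ((q:ℤ) + m * r) % m = q := by
      rw [Int.add_mul_emod_self_left]
      exact Int.emod_eq_of_lt (by positivity) (by exact_mod_cast hq)
    have hd : ((q:ℤ) + m * r) / m = r := by
      rw [Int.add_mul_ediv_left _ _ (by exact_mod_cast hm.ne' : (m:ℤ) ≠ 0),
        Int.ediv_eq_zero_of_lt (by positivity) (by exact_mod_cast hq), zero_add]
    refine Prod.ext ?_ ?_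
    · apply Fin.ext
      simp [hq']
    · simpa using hd
  right_inv := by
    intro n
    simp only
    have := Int.mul_ediv_add_emod n m
    have h1 : 0 ≤ n % (m:ℤ) := Int.emod_nonneg n (by exact_mod_cast hm.ne')
    omega

lemma tsum_int_partition (m : ℕ) (hm : 0 < m) (f : ℤ → ℂ) (hf : Summable f) :
    ∑' n : ℤ, f n = ∑ q ∈ Finset.range m, ∑' r : ℤ, f (q + m * r) := by
  have he := (zModEquiv m hm).tsum_eq f
  rw [← he]
  have hs : Summable (fun p : Fin m × ℤ => f ((zModEquiv m hm) p)) :=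
    (zModEquiv m hm).summable_iff.mpr hf
  rw [Summable.tsum_prod' hs (fun q => by
    apply hs.prod_factor)]
  rw [tsum_fintype]
  rw [Finset.sum_range fun q => ∑' r : ℤ, f (q + m * r)]
  rfl

lemma lhs_identity (m : ℕ) (hm : 0 < m) (hme : Even m) {t : ℝ} (ht : 0 < t) :
    jacobiTheta₂ 0 ((((m:ℝ)⁻¹ : ℝ) : ℂ) + Complex.I * t)
      = ∑ q ∈ Finset.range m, Complex.exp (Real.pi * Complex.I * (q:ℂ)^2 / m) *
          (((m : ℝ) * Real.sqrt t : ℝ) : ℂ)⁻¹ *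
          jacobiTheta₂ (((q / m : ℝ) : ℂ)) (Complex.I * ((((m:ℝ)^2 * t)⁻¹ : ℝ) : ℂ)) := by
  set τ : ℂ := (((m:ℝ)⁻¹ : ℝ) : ℂ) + Complex.I * t with hτ
  have hτim : τ.im = t := by simp [hτ]
  have hτpos : 0 < τ.im := by rw [hτim]; exact ht
  have hm0 : (m : ℝ) ≠ 0 := Nat.cast_ne_zero.mpr hm.ne'
  have hmC : (m : ℂ) ≠ 0 := Nat.cast_ne_zero.mpr hm.ne'
  have ht0 : (t : ℂ) ≠ 0 := by exact_mod_cast ht.ne'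
  obtain ⟨k, hk⟩ := hme
  have hk0 : k ≠ 0 := by omega
  have hkC : (k : ℂ) ≠ 0 := Nat.cast_ne_zero.mpr hk0
  have hmk : (m : ℂ) = 2 * (k : ℂ) := by
    have : (m : ℤ) = 2 * k := by exact_mod_cast hk.trans (two_mul k).symm
    exact_mod_cast this
  have h1 : jacobiTheta₂ 0 τ = ∑' n : ℤ, Complex.exp (Real.pi * Complex.I * (n:ℂ)^2 * τ) := by
    unfold jacobiTheta₂ jacobiTheta₂_term
    exact tsum_congr fun n => by ring_nf
  have hsum : Summable (fun n : ℤ => Complex.exp (Real.pi * Complex.I * (n:ℂ)^2 * τ)) := by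
    have := (summable_jacobiTheta₂_term_iff 0 τ).mpr hτpos
    apply this.congr
    intro n
    unfold jacobiTheta₂_term
    ring_nf
  rw [h1, tsum_int_partition m hm _ hsum]
  apply Finset.sum_congr rfl
  intro q hq
  have hterm : ∀ r : ℤ, Complex.exp (Real.pi * Complex.I * ((((q:ℤ) + m * r : ℤ)):ℂ)^2 * τ)
      = Complex.exp (Real.pi * Complex.I * (q:ℂ)^2 / m) * Complex.exp (-(Real.pi:ℂ) * t * (q:ℂ)^2) *
        Complex.exp (-(Real.pi:ℂ) * (((m:ℝ)^2 * t : ℝ):ℂ) * (r:ℂ)^2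
          + 2 * (Real.pi:ℂ) * ((-( (m:ℝ) * t * q) : ℝ):ℂ) * (r:ℂ)) := by
    intro r
    have hE : Real.pi * Complex.I * ((((q:ℤ) + m * r : ℤ)):ℂ)^2 * τ
        = (Real.pi * Complex.I * (q:ℂ)^2 / m + (-(Real.pi:ℂ) * t * (q:ℂ)^2)
            + (-(Real.pi:ℂ) * (((m:ℝ)^2 * t : ℝ):ℂ) * (r:ℂ)^2
            + 2 * (Real.pi:ℂ) * ((-( (m:ℝ) * t * q) : ℝ):ℂ) * (r:ℂ)))
          + ((q * r : ℤ) : ℂ) * (2 * Real.pi * Complex.I)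
          + ((k * r^2 : ℤ) : ℂ) * (2 * Real.pi * Complex.I) := by
      rw [hτ]
      push_cast
      rw [hmk]
      have hI2 : Complex.I^2 = -1 := Complex.I_sq
      field_simp
      ring_nf
      rw [Complex.I_sq]
      ring
    rw [hE, Complex.exp_add, Complex.exp_add, Complex.exp_int_mul_two_pi_mul_I,
      Complex.exp_int_mul_two_pi_mul_I, mul_one, mul_one, Complex.exp_add, Complex.exp_add]
  rw [tsum_congr hterm, tsum_mul_left]
  have hre : 0 < ((((m:ℝ)^2 * t : ℝ)):ℂ).re := by
    simp only [Complex.ofReal_re]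
    positivity
  rw [Complex.tsum_exp_neg_quadratic hre]
  have hdual : ∀ n : ℤ, Complex.exp (-(Real.pi:ℂ) / (((m:ℝ)^2 * t : ℝ):ℂ)
        * ((n:ℂ) + Complex.I * ((-( (m:ℝ) * t * q) : ℝ):ℂ))^2)
      = Complex.exp ((Real.pi:ℂ) * t * (q:ℂ)^2) *
        jacobiTheta₂_term n (((q / m : ℝ) : ℂ)) (Complex.I * ((((m:ℝ)^2 * t)⁻¹ : ℝ) : ℂ)) := by
    intro n
    unfold jacobiTheta₂_term
    rw [← Complex.exp_add]
    congr 1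
    push_cast
    field_simp
    ring_nf
    rw [Complex.I_sq]
    ring
  rw [tsum_congr hdual, tsum_mul_left]
  have hcpow : ((((m:ℝ)^2 * t : ℝ)):ℂ) ^ (1/2 : ℂ) = (((m:ℝ) * Real.sqrt t : ℝ) : ℂ) := by
    rw [show ((1/2 : ℂ)) = ((1/2 : ℝ) : ℂ) by norm_num,
      ← Complex.ofReal_cpow (by positivity : (0:ℝ) ≤ (m:ℝ)^2 * t) (1/2 : ℝ)]
    congr 1
    rw [← Real.sqrt_eq_rpow, Real.sqrt_mul (by positivity), Real.sqrt_sq (by positivity)]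
  rw [hcpow]
  have hBC : Complex.exp (-(Real.pi:ℂ) * t * (q:ℂ)^2) * Complex.exp ((Real.pi:ℂ) * t * (q:ℂ)^2) = 1 := by
    rw [← Complex.exp_add, show -(Real.pi:ℂ) * t * (q:ℂ)^2 + (Real.pi:ℂ) * t * (q:ℂ)^2 = 0 by ring,
      Complex.exp_zero]
  unfold jacobiTheta₂
  calc Complex.exp (Real.pi * Complex.I * (q:ℂ)^2 / m) * Complex.exp (-(Real.pi:ℂ) * t * (q:ℂ)^2) *
        (1 / (((m:ℝ) * Real.sqrt t : ℝ) : ℂ) *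
          (Complex.exp ((Real.pi:ℂ) * t * (q:ℂ)^2) *
            ∑' n : ℤ, jacobiTheta₂_term n (((q / m : ℝ) : ℂ)) (Complex.I * ((((m:ℝ)^2 * t)⁻¹ : ℝ) : ℂ))))
      = Complex.exp (Real.pi * Complex.I * (q:ℂ)^2 / m) * (((m:ℝ) * Real.sqrt t : ℝ) : ℂ)⁻¹ *
          (∑' n : ℤ, jacobiTheta₂_term n (((q / m : ℝ) : ℂ)) (Complex.I * ((((m:ℝ)^2 * t)⁻¹ : ℝ) : ℂ)))
          * (Complex.exp (-(Real.pi:ℂ) * t * (q:ℂ)^2) * Complex.exp ((Real.pi:ℂ) * t * (q:ℂ)^2)) := by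
        rw [one_div]; ring
    _ = _ := by rw [hBC, mul_one]

lemma jacobiTheta₂_sub_two_nat (z w : ℂ) (k : ℕ) :
    jacobiTheta₂ z (w - 2 * k) = jacobiTheta₂ z w := by
  induction k with
  | zero => simp
  | succ n ih =>
    have h2 := jacobiTheta₂_add_right z (w - 2 * ((n + 1 : ℕ) : ℂ))
    rw [show w - 2 * ((n + 1 : ℕ) : ℂ) + 2 = w - 2 * (n : ℂ) by push_cast; ring] at h2
    rw [← h2]
    exact ih

lemma rhs_identity (m : ℕ) (hm : 0 < m) (hme : Even m) {t : ℝ} (ht : 0 < t) :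
    jacobiTheta₂ 0 ((((m:ℝ)⁻¹ : ℝ) : ℂ) + Complex.I * t)
      = 1 / (-Complex.I * ((((m:ℝ)⁻¹ : ℝ) : ℂ) + Complex.I * t)) ^ (1/2 : ℂ)
        * (1 / (-Complex.I * (Complex.I * (m:ℂ)^2 * t / (1 + Complex.I * m * t))) ^ (1/2 : ℂ))
        * jacobiTheta₂ 0 (-1 / (Complex.I * (m:ℂ)^2 * t / (1 + Complex.I * m * t))) := by
  set τ : ℂ := (((m:ℝ)⁻¹ : ℝ) : ℂ) + Complex.I * t with hτ
  set σ : ℂ := Complex.I * (m:ℂ)^2 * t / (1 + Complex.I * m * t) with hσ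
  have hmC : (m : ℂ) ≠ 0 := Nat.cast_ne_zero.mpr hm.ne'
  have htC : (t : ℂ) ≠ 0 := by exact_mod_cast ht.ne'
  have hden : (1 + Complex.I * m * t) ≠ 0 := by
    intro h
    have := congrArg Complex.re h
    simp [Complex.add_re, Complex.mul_re] at this
  have hτ0 : τ ≠ 0 := by
    intro h
    have := congrArg Complex.im h
    simp [hτ] at this
    exact ht.ne' this
  have hden2 : (1 + (m:ℂ) * Complex.I * t) ≠ 0 := by
    rwa [show (1 + (m:ℂ) * Complex.I * t) = 1 + Complex.I * m * t by ring]
  have key : -1 / τ = σ - m := by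
    rw [div_eq_iff hτ0, hσ, hτ]
    push_cast
    field_simp
    ring
  have h1 := jacobiTheta₂_functional_equation 0 τ
  simp only [zero_pow, ne_eq, OfNat.ofNat_ne_zero, not_false_eq_true, zero_div, mul_zero,
    Complex.exp_zero, mul_one] at h1
  obtain ⟨k, hk⟩ := hme
  have hmk : (m : ℂ) = 2 * (k : ℂ) := by
    have : (m : ℤ) = 2 * k := by exact_mod_cast hk.trans (two_mul k).symm
    exact_mod_cast this
  have h2 : jacobiTheta₂ 0 (-1 / τ) = jacobiTheta₂ 0 σ := by
    rw [key, hmk, show σ - 2 * (k:ℂ) = σ - 2 * (k:ℕ) by norm_num]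
    exact jacobiTheta₂_sub_two_nat 0 σ k
  have h3 := jacobiTheta₂_functional_equation 0 σ
  simp only [zero_pow, ne_eq, OfNat.ofNat_ne_zero, not_false_eq_true, zero_div, mul_zero,
    Complex.exp_zero, mul_one] at h3
  rw [h1, h2, h3]
  ring

lemma sum_Ico_shift (f : ℤ → ℂ) (a b c : ℤ) :
    ∑ x ∈ Finset.Ico (c + a) (c + b), f x = ∑ x ∈ Finset.Ico a b, f (c + x) := by
  rw [← Finset.map_add_left_Ico, Finset.sum_map]
  rfl

lemma window_eq (f : ℤ → ℂ) (c : ℤ) (hc : 0 < c) (hper : ∀ x, f (x + c) = f x) (a : ℤ) :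
    ∑ x ∈ Finset.Ico a (a + c), f x = ∑ x ∈ Finset.Ico (0:ℤ) c, f x := by
  have step : ∀ b : ℤ, ∑ x ∈ Finset.Ico (b + 1) (b + 1 + c), f x
      = ∑ x ∈ Finset.Ico b (b + c), f x := by
    intro b
    have h1 : Finset.Ico b (b + c) = insert b (Finset.Ico (b + 1) (b + c)) := by
      ext x
      simp only [Finset.mem_Ico, Finset.mem_insert]
      omega
    have h2 : Finset.Ico (b + 1) (b + 1 + c) = insert (b + c) (Finset.Ico (b + 1) (b + c)) := by
      ext x
      simp only [Finset.mem_Ico, Finset.mem_insert]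
      omega
    rw [h1, h2, Finset.sum_insert (by simp only [Finset.mem_Ico]; omega),
      Finset.sum_insert (by simp only [Finset.mem_Ico]; omega)]
    rw [show b + c = b + c by rfl, hper b]
  induction a using Int.induction_on with
  | zero => rw [zero_add]
  | succ n ih => rw [show ((n:ℤ) + 1) = (n:ℤ) + 1 by rfl, step (n:ℤ), ih]
  | pred n ih => rw [← ih, ← step (-(n:ℤ) - 1), show (-(n:ℤ) - 1 + 1) = -(n:ℤ) by ring]

lemma periodic_sum (f : ℤ → ℂ) (c : ℤ) (hc : 0 < c) (hper : ∀ x, f (x + c) = f x)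
    (a : ℤ) (k : ℕ) :
    ∑ x ∈ Finset.Ico a (a + k * c), f x = k • ∑ x ∈ Finset.Ico (0:ℤ) c, f x := by
  induction k with
  | zero => simp
  | succ n ih =>
    have hsplit : Finset.Ico a (a + (n + 1 : ℕ) * c)
        = Finset.Ico a (a + n * c) ∪ Finset.Ico (a + n * c) (a + n * c + c) := by
      rw [Finset.Ico_union_Ico_eq_Ico (by nlinarith [Int.natCast_nonneg n]) (by push_cast; nlinarith)]
      congr 1
      push_cast
      ring
    rw [hsplit, Finset.sum_union (Finset.Ico_disjoint_Ico_consecutive a _ _), ih,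
      window_eq f c hc hper (a + n * c), succ_nsmul]

lemma sum_Ico_int_eq_range (f : ℤ → ℂ) (n : ℕ) :
    ∑ x ∈ Finset.Ico (0:ℤ) n, f x = ∑ q ∈ Finset.range n, f q := by
  induction n with
  | zero => simp
  | succ k ih =>
    have h1 : Finset.Ico (0:ℤ) ((k+1 : ℕ) : ℤ) = insert ((k:ℤ)) (Finset.Ico (0:ℤ) k) := by
      ext x
      simp only [Finset.mem_Ico, Finset.mem_insert]
      omega
    rw [h1, Finset.sum_insert (by simp only [Finset.mem_Ico]; omega), ih, Finset.range_add_one,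
      Finset.sum_insert (by simp)]

lemma gauss_even (m : ℕ) (hm : 0 < m) (hme : Even m) :
    ∑ q ∈ Finset.range m, Complex.exp (Real.pi * Complex.I * (q:ℂ)^2 / m)
      = (Real.sqrt m : ℂ) * Complex.exp (Real.pi * Complex.I / 4) := by
  have hm0 : (m : ℝ) ≠ 0 := Nat.cast_ne_zero.mpr hm.ne'
  have hmC : (m : ℂ) ≠ 0 := Nat.cast_ne_zero.mpr hm.ne'
  have hmpos : (0:ℝ) < m := by exact_mod_cast hm
  set l : Filter ℝ := 𝓝[>] (0:ℝ) with hl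
  set T : ℂ := ∑ q ∈ Finset.range m, Complex.exp (Real.pi * Complex.I * (q:ℂ)^2 / m) with hT
  set F : ℝ → ℂ := fun t => (Real.sqrt t : ℂ) * jacobiTheta₂ 0 ((((m:ℝ)⁻¹ : ℝ) : ℂ) + Complex.I * t)
    with hF
  -- auxiliary : (m² t)⁻¹ → atTop
  have hatTop : Tendsto (fun t : ℝ => ((m:ℝ)^2 * t)⁻¹) l atTop := by
    have h1 : Tendsto (fun t : ℝ => t⁻¹) l atTop := tendsto_inv_nhdsGT_zero
    have h2 := h1.const_mul_atTop (show (0:ℝ) < ((m:ℝ)^2)⁻¹ by positivity)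
    apply h2.congr
    intro t
    rw [mul_inv]
  have him : ∀ x : ℝ, (Complex.I * ((x:ℝ):ℂ)).im = x := by
    intro x
    rw [Complex.mul_im, Complex.I_re, Complex.I_im, Complex.ofReal_re, Complex.ofReal_im]
    ring
  have hofReal : Tendsto (fun t : ℝ => (t : ℂ)) l (𝓝 0) := by
    have := (Complex.continuous_ofReal.tendsto 0).mono_left
      (nhdsWithin_le_nhds : 𝓝[>] (0:ℝ) ≤ 𝓝 0)
    simpa using this
  -- Limit 1
  have T1 : Tendsto F l (𝓝 ((1 / (m:ℂ)) * T)) := by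
    have heq : ∀ᶠ t in l, (∑ q ∈ Finset.range m,
        Complex.exp (Real.pi * Complex.I * (q:ℂ)^2 / m) * (1 / (m:ℂ)) *
          jacobiTheta₂ (((q / m : ℝ) : ℂ)) (Complex.I * ((((m:ℝ)^2 * t)⁻¹ : ℝ) : ℂ))) = F t := by
      filter_upwards [self_mem_nhdsWithin] with t ht
      rw [Set.mem_Ioi] at ht
      rw [hF]
      simp only
      rw [lhs_identity m hm hme ht, Finset.mul_sum]
      apply Finset.sum_congr rfl
      intro q hq
      have hst : (Real.sqrt t : ℂ) ≠ 0 := by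
        exact_mod_cast (Real.sqrt_pos.mpr ht).ne'
      have : (((m : ℝ) * Real.sqrt t : ℝ) : ℂ) = (m : ℂ) * (Real.sqrt t : ℂ) := by push_cast; ring
      rw [this]
      field_simp
    apply Tendsto.congr' heq
    have key : ∀ q ∈ Finset.range m, Tendsto (fun t : ℝ =>
        Complex.exp (Real.pi * Complex.I * ((q:ℕ):ℂ)^2 / m) * (1 / (m:ℂ)) *
          jacobiTheta₂ ((((q:ℕ) / m : ℝ) : ℂ)) (Complex.I * ((((m:ℝ)^2 * t)⁻¹ : ℝ) : ℂ))) l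
        (𝓝 (Complex.exp (Real.pi * Complex.I * ((q:ℕ):ℂ)^2 / m) * (1 / (m:ℂ)))) := by
      intro q hq
      have hth : Tendsto (fun t : ℝ => jacobiTheta₂ ((((q:ℕ) / m : ℝ) : ℂ))
          (Complex.I * ((((m:ℝ)^2 * t)⁻¹ : ℝ) : ℂ))) l (𝓝 1) := by
        apply tendsto_jacobiTheta₂_one (Complex.ofReal_im _)
        exact hatTop.congr (fun t => (him _).symm)
      simpa using (tendsto_const_nhds (x := Complex.exp (Real.pi * Complex.I * ((q:ℕ):ℂ)^2 / m)
        * (1 / (m:ℂ)))).mul hth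
    have hsumT := tendsto_finset_sum (Finset.range m) key
    convert hsumT using 2
    rw [hT, Finset.mul_sum]
    exact Finset.sum_congr rfl fun q hq => by ring
  -- Limit 2
  have T2 : Tendsto F l (𝓝 (((Real.sqrt m : ℂ) * Complex.exp (Real.pi * Complex.I / 4)) * (1 / (m:ℂ)) * 1)) := by
    set A : ℝ → ℂ := fun t => 1 / (-Complex.I * ((((m:ℝ)⁻¹ : ℝ) : ℂ) + Complex.I * t)) ^ (1/2 : ℂ)
    set C : ℝ → ℂ := fun t => jacobiTheta₂ 0 (-1 / (Complex.I * (m:ℂ)^2 * t / (1 + Complex.I * m * t)))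
    have hden : ∀ t : ℝ, 0 < t → (1 + Complex.I * m * t) ≠ 0 := by
      intro t ht h
      have := congrArg Complex.re h
      simp [Complex.add_re, Complex.mul_re] at this
    -- TA
    have TA : Tendsto A l (𝓝 ((Real.sqrt m : ℂ) * Complex.exp (Real.pi * Complex.I / 4))) := by
      have hb : Tendsto (fun t : ℝ => -Complex.I * ((((m:ℝ)⁻¹ : ℝ) : ℂ) + Complex.I * t)) l
          (𝓝 (-Complex.I * (((m:ℝ)⁻¹ : ℝ) : ℂ))) := by
        have := ((tendsto_const_nhds (x := (((m:ℝ)⁻¹ : ℝ) : ℂ))).add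
          ((tendsto_const_nhds (x := Complex.I)).mul hofReal)).const_mul (-Complex.I)
        simpa using this
      have hslit : (-Complex.I * (((m:ℝ)⁻¹ : ℝ) : ℂ)) ∈ Complex.slitPlane := by
        rw [Complex.mem_slitPlane_iff]
        right
        simp [Complex.mul_im]
        positivity
      have hcont := (continuousAt_cpow_const (b := (1/2 : ℂ)) hslit).tendsto.comp hb
      have hval : (-Complex.I * (((m:ℝ)⁻¹ : ℝ) : ℂ)) ^ (1/2 : ℂ)
          = ((Real.sqrt m : ℂ))⁻¹ * Complex.exp (-(Real.pi * Complex.I) / 4) := by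
        have h1 : (-Complex.I * (((m:ℝ)⁻¹ : ℝ) : ℂ)) = (((m:ℝ)⁻¹ : ℝ) : ℂ) * (-Complex.I) := by ring
        rw [h1, cpow_real_mul (by positivity) (by simp [Complex.I_ne_zero]) _]
        congr 1
        · rw [show ((1/2 : ℂ)) = ((1/2 : ℝ) : ℂ) by norm_num,
            ← Complex.ofReal_cpow (by positivity) (1/2 : ℝ)]
          rw [← Real.sqrt_eq_rpow, Real.sqrt_inv]
          push_cast
          ring
        · rw [Complex.cpow_def_of_ne_zero (by simp [Complex.I_ne_zero]), Complex.log_neg_I]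
          congr 1
          push_cast
          ring
      have hne : (-Complex.I * (((m:ℝ)⁻¹ : ℝ) : ℂ)) ^ (1/2 : ℂ) ≠ 0 := by
        rw [hval]
        apply mul_ne_zero
        · simp
          positivity
        · exact Complex.exp_ne_zero _
      have := hcont.inv₀ hne
      have hlim : ((-Complex.I * (((m:ℝ)⁻¹ : ℝ) : ℂ)) ^ (1/2 : ℂ))⁻¹
          = (Real.sqrt m : ℂ) * Complex.exp (Real.pi * Complex.I / 4) := by
        rw [hval, mul_inv, inv_inv, ← Complex.exp_neg]
        congr 2
        ring
      rw [hlim] at this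
      apply this.congr
      intro t
      simp only [Function.comp_apply, one_div, A]
    -- TB
    have TB : Tendsto (fun t : ℝ => (Real.sqrt t : ℂ) *
        (1 / (-Complex.I * (Complex.I * (m:ℂ)^2 * t / (1 + Complex.I * m * t))) ^ (1/2 : ℂ)))
        l (𝓝 (1 / (m:ℂ))) := by
      have heq : ∀ᶠ t in l, (1 / (((m:ℂ)^2 / (1 + Complex.I * m * t)) ^ (1/2 : ℂ)))
          = (Real.sqrt t : ℂ) *
            (1 / (-Complex.I * (Complex.I * (m:ℂ)^2 * t / (1 + Complex.I * m * t))) ^ (1/2 : ℂ)) := by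
        filter_upwards [self_mem_nhdsWithin] with t ht
        rw [Set.mem_Ioi] at ht
        have h1 : -Complex.I * (Complex.I * (m:ℂ)^2 * t / (1 + Complex.I * m * t))
            = (t : ℂ) * ((m:ℂ)^2 / (1 + Complex.I * m * t)) := by
          have hI2 : Complex.I ^ 2 = -1 := Complex.I_sq
          have hI3 : Complex.I ^ 3 = -Complex.I := by rw [pow_succ, hI2]; ring
          field_simp [hden t ht]
          ring_nf
          simp only [hI2, hI3]
          ring
        have hw : ((m:ℂ)^2 / (1 + Complex.I * m * t)) ≠ 0 :=
          div_ne_zero (pow_ne_zero 2 hmC) (hden t ht)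
        rw [h1, cpow_real_mul ht hw]
        have h2 : ((t:ℝ):ℂ) ^ (1/2 : ℂ) = ((Real.sqrt t : ℝ) : ℂ) := by
          rw [show ((1/2 : ℂ)) = ((1/2 : ℝ) : ℂ) by norm_num,
            ← Complex.ofReal_cpow ht.le (1/2 : ℝ), ← Real.sqrt_eq_rpow]
        rw [h2]
        have hst : ((Real.sqrt t : ℝ) : ℂ) ≠ 0 := by
          exact_mod_cast (Real.sqrt_pos.mpr ht).ne'
        have hw2 : ((m:ℂ)^2 / (1 + Complex.I * m * t)) ^ (1/2 : ℂ) ≠ 0 := by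
          intro h
          rw [Complex.cpow_eq_zero_iff] at h
          exact hw h.1
        field_simp
      apply Tendsto.congr' heq
      have hbase : Tendsto (fun t : ℝ => (m:ℂ)^2 / (1 + Complex.I * m * t)) l (𝓝 ((m:ℂ)^2)) := by
        have hden1 : Tendsto (fun t : ℝ => 1 + Complex.I * m * (t:ℂ)) l (𝓝 1) := by
          have := (tendsto_const_nhds (x := (1:ℂ))).add
            (((tendsto_const_nhds (x := Complex.I * m)).mul hofReal))
          simpa using this.congr (fun t => by ring)
        have := (tendsto_const_nhds (x := (m:ℂ)^2)).div hden1 (by norm_num)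
        rw [div_one] at this
        exact this
      have hslit2 : ((m:ℂ)^2) ∈ Complex.slitPlane := by
        rw [Complex.mem_slitPlane_iff]
        left
        have : ((m:ℂ)^2) = (((m:ℝ)^2 : ℝ) : ℂ) := by push_cast; ring
        rw [this, Complex.ofReal_re]
        positivity
      have hcont := (continuousAt_cpow_const (b := (1/2 : ℂ)) hslit2).tendsto.comp hbase
      have hval2 : ((m:ℂ)^2) ^ (1/2 : ℂ) = (m:ℂ) := by
        have : ((m:ℂ)^2) = (((m:ℝ)^2 : ℝ) : ℂ) := by push_cast; ring
        rw [this, show ((1/2 : ℂ)) = ((1/2 : ℝ) : ℂ) by norm_num,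
          ← Complex.ofReal_cpow (by positivity) (1/2 : ℝ), ← Real.sqrt_eq_rpow,
          Real.sqrt_sq hmpos.le]
        norm_cast
      rw [hval2] at hcont
      have := hcont.inv₀ hmC
      simp only [one_div]
      exact this.congr (fun t => by norm_num [Function.comp_apply])
    -- TC
    have TC : Tendsto C l (𝓝 1) := by
      apply tendsto_jacobiTheta₂_one (show (0:ℂ).im = 0 by simp)
      have heq : ∀ᶠ t in l, ((m:ℝ)^2 * t)⁻¹
          = (-1 / (Complex.I * (m:ℂ)^2 * t / (1 + Complex.I * m * t))).im := by
        filter_upwards [self_mem_nhdsWithin] with t ht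
        rw [Set.mem_Ioi] at ht
        have htC : (t : ℂ) ≠ 0 := by exact_mod_cast ht.ne'
        have hσ : (-1 / (Complex.I * (m:ℂ)^2 * t / (1 + Complex.I * m * t)))
            = Complex.I * ((((m:ℝ)^2 * t)⁻¹ : ℝ) : ℂ) - (((m:ℝ)⁻¹ : ℝ) : ℂ) := by
          have hnz : Complex.I * (m:ℂ)^2 * t ≠ 0 :=
            mul_ne_zero (mul_ne_zero Complex.I_ne_zero (pow_ne_zero 2 hmC)) htC
          rw [div_div_eq_mul_div, div_eq_iff (by exact hnz)]
          push_cast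
          field_simp
          ring_nf
          rw [Complex.I_sq]
          ring
        rw [hσ, Complex.sub_im, him, Complex.ofReal_im, sub_zero]
      exact Tendsto.congr' heq hatTop
    -- combine
    have heqF : ∀ᶠ t in l, (A t * ((Real.sqrt t : ℂ) *
        (1 / (-Complex.I * (Complex.I * (m:ℂ)^2 * t / (1 + Complex.I * m * t))) ^ (1/2 : ℂ))) * C t)
        = F t := by
      filter_upwards [self_mem_nhdsWithin] with t ht
      rw [Set.mem_Ioi] at ht
      rw [hF]
      simp only [A, C]
      rw [rhs_identity m hm hme ht]
      ring
    apply Tendsto.congr' heqF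
    exact (TA.mul TB).mul TC
  -- conclude
  have hthis := tendsto_nhds_unique T1 T2
  rw [mul_one] at hthis
  have h4 : (1/(m:ℂ)) * T = (1/(m:ℂ)) * ((Real.sqrt m : ℂ) * Complex.exp (Real.pi * Complex.I / 4)) := by
    rw [hthis]; ring
  exact mul_left_cancel₀ (one_div_ne_zero hmC) h4

lemma partA (H : ℕ) (hH : 0 < H) (hHe : Even H) :
    ∀ m : ℤ, 0 < m → m ∣ (H : ℤ) →
      (Real.sqrt (m : ℝ) : ℂ) * Complex.exp (-(Real.pi * Complex.I / 4)) *
          (Finset.Ico (-((H : ℤ) / 2)) ((H : ℤ) / 2)).sum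
            (fun p : ℤ => Complex.exp (Real.pi * Complex.I * (p : ℂ) ^ 2 / (m : ℂ)))
        = (Finset.Ico (-((H : ℤ) / 2)) ((H : ℤ) / 2)).sum
            (fun x : ℤ => Complex.exp (-(Real.pi * Complex.I * (m : ℂ) * (x : ℂ) ^ 2))) := by
  intro m hm hdvd
  obtain ⟨K, hK⟩ := (Int.even_coe_nat H).mpr hHe
  have hKval : ((H:ℤ) / 2) = K := by omega
  have haH : -((H:ℤ)/2) + H = (H:ℤ)/2 := by omega
  set a : ℤ := -((H:ℤ)/2) with ha
  set n : ℕ := m.toNat with hn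
  have hnm : (n : ℤ) = m := Int.toNat_of_nonneg hm.le
  have hn0 : 0 < n := by omega
  have hnC : ((n:ℕ) : ℂ) ≠ 0 := Nat.cast_ne_zero.mpr hn0.ne'
  have hdvd' : n ∣ H := by
    rw [← Int.natCast_dvd_natCast, hnm]
    exact hdvd
  have hmC : (m : ℂ) = ((n:ℕ) : ℂ) := by rw [← hnm]; push_cast; ring
  have hmR : (m : ℝ) = ((n:ℕ) : ℝ) := by rw [← hnm]; push_cast; ring
  set f : ℤ → ℂ := fun p => Complex.exp (Real.pi * Complex.I * (p : ℂ) ^ 2 / (m : ℂ)) with hf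
  set g : ℤ → ℂ := fun x => Complex.exp (-(Real.pi * Complex.I * (m : ℂ) * (x : ℂ) ^ 2)) with hg
  rcases Nat.even_or_odd n with he | ho
  · -- even case
    obtain ⟨k, hk⟩ := he
    have hkn : (n : ℂ) = 2 * (k : ℂ) := by push_cast [hk]; ring
    have hper : ∀ x, f (x + (n:ℤ)) = f x := by
      intro x
      rw [hf]
      simp only
      have hE : Real.pi * Complex.I * ((x + (n:ℤ) : ℤ) : ℂ) ^ 2 / (m : ℂ)
          = Real.pi * Complex.I * (x : ℂ) ^ 2 / (m : ℂ) + ((x + k : ℤ) : ℂ) * (2 * Real.pi * Complex.I) := by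
        rw [hmC]
        push_cast
        rw [hkn]
        have h2k : (2 * (k:ℂ)) ≠ 0 := by rw [← hkn]; exact hnC
        have hk0 : (k:ℂ) ≠ 0 := right_ne_zero_of_mul h2k
        field_simp
        ring
      rw [hE, Complex.exp_add, Complex.exp_int_mul_two_pi_mul_I, mul_one]
    have hHn : (H : ℤ) = (H / n : ℕ) * (n : ℤ) := by
      exact_mod_cast (Nat.div_mul_cancel hdvd').symm
    have hIco : ((H:ℤ)/2) = a + (H / n : ℕ) * (n:ℤ) := by rw [← hHn]; omega
    rw [hIco, periodic_sum f (n:ℤ) (by exact_mod_cast hn0) hper a (H/n)]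
    have hinner : ∑ x ∈ Finset.Ico (0:ℤ) (n:ℤ), f x
        = (Real.sqrt n : ℂ) * Complex.exp (Real.pi * Complex.I / 4) := by
      rw [sum_Ico_int_eq_range f n, ← gauss_even n hn0 ⟨k, hk⟩]
      apply Finset.sum_congr rfl
      intro q hq
      rw [hf]
      simp only [hmC]
      norm_num
    rw [hinner]
    -- RHS : all terms are 1
    have hgone : ∀ x ∈ Finset.Ico a (a + (H / n : ℕ) * (n:ℤ)), g x = 1 := by
      intro x hx
      rw [hg]
      simp only
      have hE : -(Real.pi * Complex.I * (m : ℂ) * (x : ℂ) ^ 2)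
          = ((-(k * x^2) : ℤ) : ℂ) * (2 * Real.pi * Complex.I) := by
        rw [hmC, hkn]
        push_cast
        ring
      rw [hE, Complex.exp_int_mul_two_pi_mul_I]
    have hRHS : ∑ x ∈ Finset.Ico a (a + (H / n : ℕ) * (n:ℤ)), g x = (H : ℂ) := by
      rw [Finset.sum_eq_card_nsmul hgone, Int.card_Ico, add_sub_cancel_left, ← hHn,
        Int.toNat_natCast, nsmul_eq_mul, mul_one]
    rw [hRHS]
    -- algebra
    rw [hmR]
    have hsq : (Real.sqrt n : ℂ) * (Real.sqrt n : ℂ) = ((n:ℕ) : ℂ) := by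
      rw [← Complex.ofReal_mul, Real.mul_self_sqrt (Nat.cast_nonneg n)]
      norm_num
    have hexp : Complex.exp (-(Real.pi * Complex.I / 4)) * Complex.exp (Real.pi * Complex.I / 4) = 1 := by
      rw [← Complex.exp_add]
      norm_num
    have hHnC : ((H / n : ℕ) : ℂ) * ((n:ℕ) : ℂ) = (H : ℂ) := by
      exact_mod_cast congrArg (fun x : ℕ => (x : ℂ)) (Nat.div_mul_cancel hdvd')
    calc (Real.sqrt n : ℂ) * Complex.exp (-(Real.pi * Complex.I / 4)) *
          ((H / n : ℕ) • ((Real.sqrt n : ℂ) * Complex.exp (Real.pi * Complex.I / 4)))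
        = ((H / n : ℕ) : ℂ) * ((Real.sqrt n : ℂ) * (Real.sqrt n : ℂ)) *
            (Complex.exp (-(Real.pi * Complex.I / 4)) * Complex.exp (Real.pi * Complex.I / 4)) := by
          rw [nsmul_eq_mul]; ring
      _ = (H : ℂ) := by rw [hsq, hexp, mul_one, hHnC]
  · -- odd case
    have h2n : 2 * n ∣ H := by
      obtain ⟨s, hs⟩ := hdvd'
      have hes : Even s := by
        rcases Nat.even_mul.mp (hs ▸ hHe) with h | h
        · exact absurd h (Nat.not_even_iff_odd.mpr ho)
        · exact h
      obtain ⟨u, hu⟩ := hes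
      exact ⟨u, by rw [hs, hu]; ring⟩
    have hper2 : ∀ x, f (x + (2 * n : ℕ) : ℤ) = f x := by
      intro x
      rw [hf]
      simp only
      have hE : Real.pi * Complex.I * ((x + (2*n : ℕ) : ℤ) : ℂ) ^ 2 / (m : ℂ)
          = Real.pi * Complex.I * (x : ℂ) ^ 2 / (m : ℂ) + ((2*x + 2*n : ℤ) : ℂ) * (2 * Real.pi * Complex.I) := by
        rw [hmC]
        push_cast
        field_simp
        ring
      rw [hE, Complex.exp_add, Complex.exp_int_mul_two_pi_mul_I, mul_one]
    have hneg : ∀ x : ℤ, f ((n:ℤ) + x) = - f x := by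
      intro x
      rw [hf]
      simp only
      have hE : Real.pi * Complex.I * (((n:ℤ) + x : ℤ) : ℂ) ^ 2 / (m : ℂ)
          = Real.pi * Complex.I * (x : ℂ) ^ 2 / (m : ℂ) + ((x : ℤ) : ℂ) * (2 * Real.pi * Complex.I)
            + (n : ℂ) * (Real.pi * Complex.I) := by
        rw [hmC]
        push_cast
        field_simp
        ring
      rw [hE, Complex.exp_add, Complex.exp_add, Complex.exp_int_mul_two_pi_mul_I, mul_one]
      have : Complex.exp ((n : ℂ) * (Real.pi * Complex.I)) = -1 := by
        rw [show ((n:ℂ) * (Real.pi * Complex.I)) = (n:ℕ) * (Real.pi * Complex.I) by norm_num,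
          Complex.exp_nat_mul, show ((Real.pi : ℂ) * Complex.I) = (Real.pi : ℂ) * Complex.I by rfl,
          Complex.exp_pi_mul_I]
        exact Odd.neg_one_pow ho
      rw [this]
      ring
    have hinner0 : ∑ x ∈ Finset.Ico (0:ℤ) ((2*n : ℕ) : ℤ), f x = 0 := by
      have hsplit : Finset.Ico (0:ℤ) ((2*n : ℕ) : ℤ)
          = Finset.Ico (0:ℤ) (n:ℤ) ∪ Finset.Ico (n:ℤ) ((n:ℤ) + (n:ℤ)) := by
        rw [Finset.Ico_union_Ico_eq_Ico (by positivity) (by omega)]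
        congr 1
        push_cast
        ring
      rw [hsplit, Finset.sum_union]
      · have hshift : ∑ x ∈ Finset.Ico (n:ℤ) ((n:ℤ) + (n:ℤ)), f x
            = ∑ x ∈ Finset.Ico (0:ℤ) (n:ℤ), f ((n:ℤ) + x) := by
          have := sum_Ico_shift f 0 (n:ℤ) (n:ℤ)
          rw [add_zero] at this
          exact this
        rw [hshift]
        rw [Finset.sum_congr rfl (fun x _ => hneg x), Finset.sum_neg_distrib]
        ring
      · rw [show ((2*n : ℕ) : ℤ) = (n:ℤ) + (n:ℤ) by push_cast; ring] at *
        apply Finset.Ico_disjoint_Ico_consecutive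
    have hHn : (H : ℤ) = (H / (2*n) : ℕ) * ((2*n : ℕ) : ℤ) := by
      exact_mod_cast (Nat.div_mul_cancel h2n).symm
    have hIco : ((H:ℤ)/2) = a + (H / (2*n) : ℕ) * ((2*n : ℕ):ℤ) := by rw [← hHn]; omega
    rw [hIco, periodic_sum f ((2*n : ℕ):ℤ) (by positivity) hper2 a (H/(2*n)), hinner0, smul_zero,
      mul_zero]
    -- RHS = 0
    have hper2' : ∀ x, g (x + (2:ℤ)) = g x := by
      intro x
      rw [hg]
      simp only
      have hE : -(Real.pi * Complex.I * (m : ℂ) * ((x + 2 : ℤ) : ℂ) ^ 2)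
          = -(Real.pi * Complex.I * (m : ℂ) * (x : ℂ) ^ 2) + ((-(m*(2*x+2)) : ℤ) : ℂ) * (2 * Real.pi * Complex.I) := by
        push_cast
        ring
      rw [hE, Complex.exp_add, Complex.exp_int_mul_two_pi_mul_I, mul_one]
    have hH2' : (H : ℤ) = ((H / 2 : ℕ) : ℤ) * 2 := by
      exact_mod_cast (Nat.div_mul_cancel hHe.two_dvd).symm
    have hodd : Odd m := by
      rcases ho with ⟨j, hj⟩
      exact ⟨(j:ℤ), by omega⟩
    have hinner2 : ∑ x ∈ Finset.Ico (0:ℤ) (2:ℤ), g x = 0 := by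
      have hset : Finset.Ico (0:ℤ) (2:ℤ) = {0, 1} := by decide
      rw [hset, Finset.sum_insert (by decide), Finset.sum_singleton, hg]
      simp only
      obtain ⟨j, hj⟩ := hodd
      have h0 : Complex.exp (-(Real.pi * Complex.I * (m : ℂ) * ((0:ℤ) : ℂ) ^ 2)) = 1 := by
        norm_num
      have h1 : Complex.exp (-(Real.pi * Complex.I * (m : ℂ) * ((1:ℤ) : ℂ) ^ 2)) = -1 := by
        have hE : -(Real.pi * Complex.I * (m : ℂ) * ((1:ℤ) : ℂ) ^ 2)
            = ((-(j+1) : ℤ) : ℂ) * (2 * Real.pi * Complex.I) + Real.pi * Complex.I := by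
          have hmj : (m : ℂ) = 2*(j:ℂ)+1 := by
            rw [show m = 2*j+1 from hj]
            push_cast
            ring
          rw [hmj]
          push_cast
          ring
        rw [hE, Complex.exp_add, Complex.exp_int_mul_two_pi_mul_I, one_mul,
          show (Real.pi : ℂ) * Complex.I = (Real.pi : ℂ) * Complex.I from rfl]
        exact Complex.exp_pi_mul_I
      rw [h0, h1]
      ring
    have hswap : a + ((H / (2*n) : ℕ) : ℤ) * ((2*n : ℕ):ℤ) = a + ((H/2 : ℕ) : ℤ) * 2 := by
      rw [← hHn, ← hH2']
    rw [hswap, periodic_sum g 2 (by norm_num) hper2' a (H/2), hinner2, smul_zero]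

lemma partB (H : ℕ) (hH : 0 < H) (hHe : Even H) :
    ∀ m : ℤ, m < 0 → -m ∣ (H : ℤ) →
      (Real.sqrt ((-m : ℤ) : ℝ) : ℂ) * Complex.exp (Real.pi * Complex.I / 4) *
          (Finset.Ico (-((H : ℤ) / 2)) ((H : ℤ) / 2)).sum
            (fun p : ℤ => Complex.exp (Real.pi * Complex.I * (p : ℂ) ^ 2 / (m : ℂ)))
        = (Finset.Ico (-((H : ℤ) / 2)) ((H : ℤ) / 2)).sum
            (fun x : ℤ => Complex.exp (-(Real.pi * Complex.I * (m : ℂ) * (x : ℂ) ^ 2))) := by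
  intro m hm hdvd
  have h := partA H hH hHe (-m) (by omega) hdvd
  have hc := congrArg (starRingEnd ℂ) h
  rw [map_mul, map_mul, map_sum, map_sum] at hc
  have e1 : (starRingEnd ℂ) ((Real.sqrt ((-m : ℤ) : ℝ) : ℂ)) = (Real.sqrt ((-m : ℤ) : ℝ) : ℂ) :=
    Complex.conj_ofReal _
  have e2 : (starRingEnd ℂ) (Complex.exp (-(Real.pi * Complex.I / 4)))
      = Complex.exp (Real.pi * Complex.I / 4) := by
    rw [← Complex.exp_conj]
    congr 1
    simp [Complex.conj_I, map_ofNat]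
    ring
  have e3 : ∀ p : ℤ, (starRingEnd ℂ) (Complex.exp (Real.pi * Complex.I * (p : ℂ) ^ 2 / ((-m : ℤ) : ℂ)))
      = Complex.exp (Real.pi * Complex.I * (p : ℂ) ^ 2 / (m : ℂ)) := by
    intro p
    rw [← Complex.exp_conj]
    congr 1
    simp [map_div₀, Complex.conj_I]
  have e4 : ∀ x : ℤ, (starRingEnd ℂ) (Complex.exp (-(Real.pi * Complex.I * ((-m : ℤ) : ℂ) * (x : ℂ) ^ 2)))
      = Complex.exp (-(Real.pi * Complex.I * (m : ℂ) * (x : ℂ) ^ 2)) := by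
    intro x
    rw [← Complex.exp_conj]
    congr 1
    simp [Complex.conj_I]
  rw [e1, e2] at hc
  rw [Finset.sum_congr rfl (fun p _ => e3 p), Finset.sum_congr rfl (fun x _ => e4 x)] at hc
  exact hc

end PoissonGaussAux

/-- Poisson-summation consequences for `φ_{im}(x) = exp(−iπmx²)` at the integer points
of `L_H` (a positive even integer `H`):
(a) for positive `m ∣ H`,
`√m·exp(−iπ/4)·∑_{−H/2 ≤ p < H/2} exp(iπp²/m) = ∑_{−H/2 ≤ x < H/2} exp(−iπmx²)`;
(b) for negative `m` with `−m ∣ H`,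
`√(−m)·exp(iπ/4)·∑_{−H/2 ≤ p < H/2} exp(iπp²/m) = ∑_{−H/2 ≤ x < H/2} exp(−iπmx²)`. -/
theorem poisson_imaginary_gaussian_integer_points (H : ℕ) (hH : 0 < H) (hHe : Even H) :
    (∀ m : ℤ, 0 < m → m ∣ (H : ℤ) →
      (Real.sqrt (m : ℝ) : ℂ) * Complex.exp (-(Real.pi * Complex.I / 4)) *
          (Finset.Ico (-((H : ℤ) / 2)) ((H : ℤ) / 2)).sum
            (fun p : ℤ => Complex.exp (Real.pi * Complex.I * (p : ℂ) ^ 2 / (m : ℂ)))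
        = (Finset.Ico (-((H : ℤ) / 2)) ((H : ℤ) / 2)).sum
            (fun x : ℤ => Complex.exp (-(Real.pi * Complex.I * (m : ℂ) * (x : ℂ) ^ 2)))) ∧
    (∀ m : ℤ, m < 0 → -m ∣ (H : ℤ) →
      (Real.sqrt ((-m : ℤ) : ℝ) : ℂ) * Complex.exp (Real.pi * Complex.I / 4) *
          (Finset.Ico (-((H : ℤ) / 2)) ((H : ℤ) / 2)).sum
            (fun p : ℤ => Complex.exp (Real.pi * Complex.I * (p : ℂ) ^ 2 / (m : ℂ)))
        = (Finset.Ico (-((H : ℤ) / 2)) ((H : ℤ) / 2)).sum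
            (fun x : ℤ => Complex.exp (-(Real.pi * Complex.I * (m : ℂ) * (x : ℂ) ^ 2)))) := by
  exact ⟨partA H hH hHe, partB H hH hHe⟩
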